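/- Let Q be an acyclic quiver of type D_n and d ∈ Φ₊. If e satisfies Tran's conditions with respect to (Q,d), and j is a vertex with e_j > 0 such that e_j > e_i for every arrow i → j, then e′ = e − δ_j satisfies 0 ≤ e′ ≤ d and every arrow of Q is acceptable with respect to (e′, d). (That is, the acceptability conditions are preserved under decrementing at such a 'sink-maximal' vertex.) -/

import Mathlib

def Acceptable (d e : ℕ → ℤ) (i k : ℕ) : Prop :=
  e i - e k ≤ max (d i - d k) 0

/-- `e - δ_j`. -/
def decrementAt (e : ℕ → ℤ) (j : ℕ) : ℕ → ℤ :=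
  fun k => e k - if k = j then 1 else 0

section decrementAt

variable {e : ℕ → ℤ} {j : ℕ}

@[simp]
lemma decrementAt_self : decrementAt e j j = e j - 1 := by
  simp [decrementAt]

@[simp]
lemma decrementAt_of_ne {k : ℕ} (hk : k ≠ j) : decrementAt e j k = e k := by
  simp [decrementAt, hk]

lemma decrementAt_le (k : ℕ) : decrementAt e j k ≤ e k := by
  unfold decrementAt
  split_ifs <;> omega

lemma decrementAt_nonneg (he : ∀ k, 0 ≤ e k) (hj : 0 < e j) (k : ℕ) :
    0 ≤ decrementAt e j k := by
  rcases eq_or_ne k j with rfl | hk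
  · simp only [decrementAt_self]
    omega
  · simpa [hk] using he k

/-- Lowering `e` at `j` can only break acceptability of an arrow into `j`, and there it is
restored by `e_i < e_j`: then `e_i - (e_j - 1) ≤ 0`. -/
lemma Acceptable.decrementAt {d : ℕ → ℤ} {i k : ℕ} (h : Acceptable d e i k)
    (hmax : k = j → e i < e k) : Acceptable d (decrementAt e j) i k := by
  unfold Acceptable at h ⊢
  rcases eq_or_ne k j with rfl | hk
  · rcases eq_or_ne i k with rfl | hi
    · simp
    · have := hmax rfl
      simp only [decrementAt_of_ne hi, decrementAt_self]
      exact (by omega : e i - (e k - 1) ≤ 0).trans (le_max_right _ _)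
  · rw [decrementAt_of_ne hk]
    exact (sub_le_sub_right (decrementAt_le i) _).trans h

end decrementAt

/-- If `e` satisfies `0 ≤ e ≤ d` and every arrow of `Q` is acceptable with respect to
`(e,d)`, and `j` is a vertex with `e_j > 0` such that `e_j > e_i` for every arrow `i → j`,
then `e' = e − δ_j` still satisfies `0 ≤ e' ≤ d` and every arrow of `Q` is acceptable
with respect to `(e', d)`. -/
theorem acceptability_preserved_under_decrement (arrow : ℕ → ℕ → Prop) (d e : ℕ → ℤ)
    (h1 : ∀ i, 0 ≤ e i ∧ e i ≤ d i)
    (h2 : ∀ i j, arrow i j → e i - e j ≤ max (d i - d j) 0)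
    (j : ℕ) (hj : 0 < e j) (hmax : ∀ i, arrow i j → e i < e j) :
    (∀ k, 0 ≤ e k - (if k = j then 1 else 0) ∧ e k - (if k = j then 1 else 0) ≤ d k) ∧
    (∀ i k, arrow i k →
      (e i - (if i = j then 1 else 0)) - (e k - (if k = j then 1 else 0)) ≤
        max (d i - d k) 0) := by
  refine ⟨fun k => ⟨decrementAt_nonneg (fun i => (h1 i).1) hj k,
    (decrementAt_le k).trans (h1 k).2⟩, fun i k hik => ?_⟩
  refine Acceptable.decrementAt (h2 i k hik) ?_
  rintro rfl
  exact hmax i hik
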